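/- arXiv:1312.5414 — 5 statements merged into one kernel-verified Lean document; each statement's English description precedes it below -/
import Mathlib

section
/- Let E be a real inner product space, k ≥ 1, and let x : [0,1] → E be k times continuously differentiable. Then for every 0 ≤ i ≤ k one has (∫₀¹ ‖x^{(i)}(t)‖² dt)^{1/2} ≤ Σ_{j=i}^{k−1} 2^{j−i} ‖x^{(j)}(0)‖ + 2^{k−i} (∫₀¹ ‖x^{(k)}(t)‖² dt)^{1/2}. -/
/-!
Write `N j` for the L² norm of `x⁽ʲ⁾` on `[0, 1]`. Since `x⁽ʲ⁾(t) = x⁽ʲ⁾(0) + ∫₀ᵗ x⁽ʲ⁺¹⁾`, every value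
of `x⁽ʲ⁾` is at most `‖x⁽ʲ⁾(0)‖ + ∫₀¹ ‖x⁽ʲ⁺¹⁾‖`, and Cauchy–Schwarz bounds the integral by `N (j + 1)`;
hence `N j ≤ ‖x⁽ʲ⁾(0)‖ + N (j + 1)`. Telescoping from `i` to `k` gives the estimate even with all
powers of `2` replaced by `1`.
-/

open Set MeasureTheory intervalIntegral
open scoped ContDiff

theorem ContDiffOn.hasDerivWithinAt_iteratedDerivWithin {𝕜 F : Type*} [NontriviallyNormedField 𝕜]
    [NormedAddCommGroup F] [NormedSpace 𝕜 F] {f : 𝕜 → F} {s : Set 𝕜} {n : ℕ∞ω} {m : ℕ}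
    (hf : ContDiffOn 𝕜 n f s) (hmn : m < n) (hs : UniqueDiffOn 𝕜 s) {t : 𝕜} (ht : t ∈ s) :
    HasDerivWithinAt (iteratedDerivWithin m f s) (iteratedDerivWithin (m + 1) f s t) s t := by
  rw [iteratedDerivWithin_succ]
  exact (hf.differentiableOn_iteratedDerivWithin hmn hs t ht).hasDerivWithinAt

theorem le_sum_Ico_add_of_le_add_succ {α : Type*} [AddCommGroup α] [PartialOrder α]
    [IsOrderedAddMonoid α] {N c : ℕ → α} {i k : ℕ} (hik : i ≤ k)
    (h : ∀ j ∈ Finset.Ico i k, N j ≤ c j + N (j + 1)) :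
    N i ≤ ∑ j ∈ Finset.Ico i k, c j + N k := by
  have htel : ∑ j ∈ Finset.Ico i k, (N j - N (j + 1)) = N i - N k := by
    simpa only [sub_neg_eq_add, neg_add_eq_sub] using Finset.sum_Ico_sub (fun j => -N j) hik
  have : N i - N k ≤ ∑ j ∈ Finset.Ico i k, c j :=
    htel ▸ Finset.sum_le_sum fun j hj => sub_le_iff_le_add.mpr (h j hj)
  exact sub_le_iff_le_add.mp this

theorem sq_intervalIntegral_le_mul_intervalIntegral_sq {f : ℝ → ℝ} {a b : ℝ} (hab : a ≤ b)
    (hf : IntervalIntegrable f volume a b)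
    (hf2 : IntervalIntegrable (fun t => f t ^ 2) volume a b) :
    (∫ t in a..b, f t) ^ 2 ≤ (b - a) * ∫ t in a..b, f t ^ 2 := by
  set A := ∫ t in a..b, f t
  set L := b - a
  -- the variance of `f` about its mean `A / L`, scaled by `L ^ 2`
  have expand : ∫ t in a..b, (L * f t - A) ^ 2 = L * ((L * ∫ t in a..b, f t ^ 2) - A ^ 2) := by
    have hpt : ∀ t, (L * f t - A) ^ 2 = L ^ 2 * f t ^ 2 - 2 * L * A * f t + A ^ 2 := fun t => by
      ring
    simp_rw [hpt]
    rw [integral_add ((hf2.const_mul _).sub (hf.const_mul _)) intervalIntegrable_const,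
      integral_sub (hf2.const_mul _) (hf.const_mul _), intervalIntegral.integral_const_mul,
      intervalIntegral.integral_const_mul, intervalIntegral.integral_const, smul_eq_mul]
    ring
  have hvar : 0 ≤ L * ((L * ∫ t in a..b, f t ^ 2) - A ^ 2) :=
    expand ▸ integral_nonneg hab fun t _ => sq_nonneg _
  rcases (sub_nonneg.mpr hab).lt_or_eq with hL | hL
  · exact sub_nonneg.mp ((mul_nonneg_iff_of_pos_left hL).mp hvar)
  · simp [A, show b = a by linarith]

theorem intervalIntegral_le_sqrt_mul_sqrt_integral_sq {f : ℝ → ℝ} {a b : ℝ} (hab : a ≤ b)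
    (hf : IntervalIntegrable f volume a b)
    (hf2 : IntervalIntegrable (fun t => f t ^ 2) volume a b) :
    ∫ t in a..b, f t ≤ √(b - a) * √(∫ t in a..b, f t ^ 2) := by
  rw [← Real.sqrt_mul (sub_nonneg.mpr hab)]
  exact Real.le_sqrt_of_sq_le (sq_intervalIntegral_le_mul_intervalIntegral_sq hab hf hf2)

theorem sqrt_integral_norm_sq_le_of_norm_le {E : Type*} [NormedAddCommGroup E] {y : ℝ → E}
    {a b C : ℝ} (hab : a ≤ b) (h : ∀ t ∈ Icc a b, ‖y t‖ ≤ C) :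
    √(∫ t in a..b, ‖y t‖ ^ 2) ≤ √(b - a) * C := by
  have hC : 0 ≤ C := (norm_nonneg _).trans (h a (left_mem_Icc.mpr hab))
  have hint : ∫ t in a..b, ‖y t‖ ^ 2 ≤ C ^ 2 * (b - a) := by
    refine (le_abs_self _).trans ?_
    rw [← abs_of_nonneg (sub_nonneg.mpr hab), ← Real.norm_eq_abs]
    refine norm_integral_le_of_norm_le_const fun t ht => ?_
    rw [uIoc_of_le hab] at ht
    rw [norm_pow, norm_norm]
    exact pow_le_pow_left₀ (norm_nonneg _) (h t (Ioc_subset_Icc_self ht)) 2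
  calc √(∫ t in a..b, ‖y t‖ ^ 2) ≤ √(C ^ 2 * (b - a)) := Real.sqrt_le_sqrt hint
    _ = √(b - a) * C := by rw [Real.sqrt_mul (sq_nonneg C), Real.sqrt_sq hC, mul_comm]

section

variable {E : Type*} [NormedAddCommGroup E] [NormedSpace ℝ E] {y g : ℝ → E} {a b : ℝ}

-- Passing to the completion of `E` makes the fundamental theorem of calculus available.
theorem norm_sub_le_integral_norm_of_hasDerivAt (hab : a ≤ b) (hy : ContinuousOn y (Icc a b))
    (hg : ContinuousOn g (Icc a b)) (hd : ∀ t ∈ Ioo a b, HasDerivAt y (g t) t) :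
    ‖y b - y a‖ ≤ ∫ t in a..b, ‖g t‖ := by
  let ι : E →L[ℝ] UniformSpace.Completion E := UniformSpace.Completion.toComplL
  have hftc : ∫ t in a..b, ι (g t) = ι (y b) - ι (y a) :=
    integral_eq_sub_of_hasDerivAt_of_le hab (ι.continuous.comp_continuousOn hy)
      (fun t ht => ι.hasFDerivAt.comp_hasDerivAt t (hd t ht))
      ((ι.continuous.comp_continuousOn hg).intervalIntegrable_of_Icc hab)
  calc ‖y b - y a‖ = ‖∫ t in a..b, ι (g t)‖ := by
        rw [hftc, ← map_sub]; exact (UniformSpace.Completion.norm_coe _).symm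
    _ ≤ ∫ t in a..b, ‖ι (g t)‖ := norm_integral_le_integral_norm hab
    _ = ∫ t in a..b, ‖g t‖ := by simp only [ι, UniformSpace.Completion.coe_toComplL,
        UniformSpace.Completion.norm_coe]

theorem norm_le_norm_left_add_integral_norm_of_hasDerivAt (hab : a ≤ b)
    (hy : ContinuousOn y (Icc a b)) (hg : ContinuousOn g (Icc a b))
    (hd : ∀ t ∈ Ioo a b, HasDerivAt y (g t) t) :
    ∀ t ∈ Icc a b, ‖y t‖ ≤ ‖y a‖ + ∫ s in a..b, ‖g s‖ := by
  intro t ht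
  calc ‖y t‖ ≤ ‖y a‖ + ‖y t - y a‖ := norm_le_norm_add_norm_sub' _ _
    _ ≤ ‖y a‖ + ∫ s in a..t, ‖g s‖ := by
        gcongr
        exact norm_sub_le_integral_norm_of_hasDerivAt ht.1 (hy.mono (Icc_subset_Icc_right ht.2))
          (hg.mono (Icc_subset_Icc_right ht.2)) fun s hs => hd s ⟨hs.1, hs.2.trans_le ht.2⟩
    _ ≤ ‖y a‖ + ∫ s in a..b, ‖g s‖ := by
        gcongr
        exact integral_mono_interval le_rfl ht.1 ht.2 (ae_of_all _ fun _ => norm_nonneg _)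
          (hg.norm.intervalIntegrable_of_Icc hab)

theorem sqrt_integral_norm_sq_le_of_hasDerivAt (hab : a ≤ b) (hy : ContinuousOn y (Icc a b))
    (hg : ContinuousOn g (Icc a b)) (hd : ∀ t ∈ Ioo a b, HasDerivAt y (g t) t) :
    √(∫ t in a..b, ‖y t‖ ^ 2) ≤
      √(b - a) * (‖y a‖ + √(b - a) * √(∫ t in a..b, ‖g t‖ ^ 2)) := by
  refine sqrt_integral_norm_sq_le_of_norm_le hab fun t ht => ?_
  calc ‖y t‖ ≤ ‖y a‖ + ∫ s in a..b, ‖g s‖ :=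
        norm_le_norm_left_add_integral_norm_of_hasDerivAt hab hy hg hd t ht
    _ ≤ _ := by
        gcongr
        exact intervalIntegral_le_sqrt_mul_sqrt_integral_sq hab
          (hg.norm.intervalIntegrable_of_Icc hab) ((hg.norm.pow 2).intervalIntegrable_of_Icc hab)

end

theorem stmt4_general {E : Type*} [NormedAddCommGroup E] [InnerProductSpace ℝ E]
    (k : ℕ) (x : ℝ → E)
    (hx : ContDiffOn ℝ k x (Set.Icc 0 1)) :
    ∀ i ≤ k,
      Real.sqrt (∫ t in (0:ℝ)..1, ‖iteratedDerivWithin i x (Set.Icc 0 1) t‖ ^ 2) ≤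
        (∑ j ∈ Finset.Ico i k,
            (2:ℝ) ^ (j - i) * ‖iteratedDerivWithin j x (Set.Icc 0 1) 0‖) +
          (2:ℝ) ^ (k - i) *
            Real.sqrt (∫ t in (0:ℝ)..1, ‖iteratedDerivWithin k x (Set.Icc 0 1) t‖ ^ 2) := by
  intro i hik
  set D : ℕ → ℝ → E := fun j => iteratedDerivWithin j x (Icc 0 1)
  set N : ℕ → ℝ := fun j => √(∫ t in (0:ℝ)..1, ‖D j t‖ ^ 2)
  have hu : UniqueDiffOn ℝ (Icc (0:ℝ) 1) := uniqueDiffOn_Icc zero_lt_one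
  have step : ∀ j ∈ Finset.Ico i k, N j ≤ ‖D j 0‖ + N (j + 1) := by
    intro j hj
    have hjk : j < k := (Finset.mem_Ico.mp hj).2
    simpa using sqrt_integral_norm_sq_le_of_hasDerivAt zero_le_one
      (hx.continuousOn_iteratedDerivWithin (mod_cast hjk.le) hu)
      (hx.continuousOn_iteratedDerivWithin (mod_cast hjk) hu)
      fun t ht => (hx.hasDerivWithinAt_iteratedDerivWithin (mod_cast hjk) hu
        (Ioo_subset_Icc_self ht)).hasDerivAt (Icc_mem_nhds ht.1 ht.2)
  calc N i ≤ ∑ j ∈ Finset.Ico i k, ‖D j 0‖ + N k := le_sum_Ico_add_of_le_add_succ hik step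
    _ ≤ _ := by
        gcongr with j
        · exact le_mul_of_one_le_left (norm_nonneg _) (one_le_pow₀ one_le_two)
        · exact le_mul_of_one_le_left (Real.sqrt_nonneg _) (one_le_pow₀ one_le_two)

/-- Iterated estimate: all lower-order derivatives of a `Cᵏ` curve are bounded in L²
by the initial derivative values and the L² norm of the top-order derivative
(from the proof of Proposition 4.1). -/
theorem stmt4 {E : Type*} [NormedAddCommGroup E] [InnerProductSpace ℝ E]
    (k : ℕ) (hk : 1 ≤ k) (x : ℝ → E)
    (hx : ContDiffOn ℝ k x (Set.Icc 0 1)) :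
    ∀ i ≤ k,
      Real.sqrt (∫ t in (0:ℝ)..1, ‖iteratedDerivWithin i x (Set.Icc 0 1) t‖ ^ 2) ≤
        (∑ j ∈ Finset.Ico i k,
            (2:ℝ) ^ (j - i) * ‖iteratedDerivWithin j x (Set.Icc 0 1) 0‖) +
          (2:ℝ) ^ (k - i) *
            Real.sqrt (∫ t in (0:ℝ)..1, ‖iteratedDerivWithin k x (Set.Icc 0 1) t‖ ^ 2) :=
  stmt4_general k x hx
end

section
/- Let E be a finite-dimensional real inner product space, k ≥ 1, and let A : [0,1] × E → E be continuous with ‖A(t,p)‖ ≤ C for all (t,p) and some constant C. Fix v₀, …, v_{k−1} ∈ E and α ≥ 0. Let (xₘ) be a sequence of k times continuously differentiable curves xₘ : [0,1] → E with xₘ^{(i)}(0) = vᵢ for 0 ≤ i ≤ k−1 and ∫₀¹ ‖xₘ^{(k)}(t) − A(t, xₘ(t))‖² dt ≤ α² for all m. Then there exist a strictly increasing map φ : ℕ → ℕ and a (k−1) times continuously differentiable curve y : [0,1] → E such that for every 0 ≤ i ≤ k−1 the derivatives x_{φ(m)}^{(i)} converge to y^{(i)} uniformly on [0,1]. -/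
/-!
Let `D m` be the `(k-1)`-st derivative of `x m`. Since `‖x⁽ᵏ⁾‖ ≤ C + ‖x⁽ᵏ⁾ - A(t, x)‖`, the
fundamental theorem of calculus and the Cauchy–Schwarz inequality give
`‖D m t - D m s‖ ≤ C |t - s| + |α| √|t - s|`, a continuity modulus common to all `m`. As
`D m 0 = v (k-1)`, the family `D m` is also uniformly bounded, so Arzelà–Ascoli yields a
subsequence converging uniformly to some `w`. The lower derivatives of `x m` are iterated
primitives of `D m` with the fixed initial values `v i`, so along the subsequence they converge
uniformly to the corresponding iterated primitives of `w`.
-/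

open Set Filter Topology MeasureTheory intervalIntegral

open BoundedContinuousFunction in
theorem exists_tendstoUniformlyOn_of_continuity_modulus {β : Type*} [MetricSpace β]
    {F : ℕ → ℝ → β} {a b : ℝ} (hab : a ≤ b) {K : Set β} (hK : IsCompact K)
    (hFK : ∀ m, ∀ t ∈ Icc a b, F m t ∈ K) {ω : ℝ → ℝ} (hω : Tendsto ω (𝓝 0) (𝓝 0))
    (hF : ∀ m, ∀ s ∈ Icc a b, ∀ t ∈ Icc a b, dist (F m s) (F m t) ≤ ω (dist s t)) :
    ∃ φ : ℕ → ℕ, StrictMono φ ∧ ∃ w : ℝ → β, Continuous w ∧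
      TendstoUniformlyOn (fun m => F (φ m)) w atTop (Icc a b) := by
  have hcont : ∀ m, Continuous fun u : Icc a b => F m u :=
    (Metric.equicontinuous_of_continuity_modulus ω hω (fun m (u : Icc a b) => F m u)
      fun u v m => hF m u u.2 v v.2).continuous
  let G : ℕ → Icc a b →ᵇ β := fun m => .mkOfCompact ⟨_, hcont m⟩
  have hequi : Equicontinuous ((↑) : range G → Icc a b → β) := by
    refine Metric.equicontinuous_of_continuity_modulus ω hω _ fun u v g => ?_
    obtain ⟨_, m, rfl⟩ := g
    exact hF m u u.2 v v.2
  have hG : IsCompact (closure (range G)) :=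
    arzela_ascoli K hK _ (by rintro _ u ⟨m, rfl⟩; exact hFK m u u.2) hequi
  obtain ⟨w, -, φ, hφ, hlim⟩ := hG.isSeqCompact fun m => subset_closure (mem_range_self m)
  refine ⟨φ, hφ, w ∘ projIcc a b hab, w.continuous.comp continuous_projIcc, ?_⟩
  rw [tendstoUniformlyOn_iff_tendstoUniformly_comp_coe]
  have hw : (w ∘ projIcc a b hab) ∘ Subtype.val = w := funext fun u => by simp
  rw [hw]
  exact tendsto_iff_tendstoUniformly.mp hlim

theorem sq_integral_le_mul_integral_sq {g : ℝ → ℝ} {s t : ℝ} (hst : s ≤ t)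
    (hg : ContinuousOn g (Icc s t)) :
    (∫ u in s..t, g u) ^ 2 ≤ (t - s) * ∫ u in s..t, g u ^ 2 := by
  have hg' : ContinuousOn g (uIcc s t) := by rwa [uIcc_of_le hst]
  -- `c ↦ ∫ (g - c)²` is a nonnegative quadratic, so its discriminant is nonpositive.
  have hquad : ∀ c : ℝ, 0 ≤ (t - s) * (c * c) + (-2 * ∫ u in s..t, g u) * c
      + ∫ u in s..t, g u ^ 2 := fun c => by
    have h : 0 ≤ ∫ u in s..t, (g u - c) ^ 2 := integral_nonneg hst fun u _ => sq_nonneg _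
    have hsq : IntervalIntegrable (fun u => g u ^ 2) volume s t := (hg'.pow 2).intervalIntegrable
    have hlin : IntervalIntegrable (fun u => 2 * g u * c) volume s t :=
      ((continuousOn_const.mul hg').mul continuousOn_const).intervalIntegrable
    simp only [sub_sq] at h
    rw [integral_add (hsq.sub hlin) intervalIntegrable_const, integral_sub hsq hlin,
      intervalIntegral.integral_mul_const, intervalIntegral.integral_const_mul,
      intervalIntegral.integral_const, smul_eq_mul] at h
    linarith
  have := discrim_le_zero hquad
  rw [discrim] at this
  nlinarith

section

variable {E : Type*} [NormedAddCommGroup E] [NormedSpace ℝ E]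

theorem integral_iteratedDerivWithin_succ [CompleteSpace E] {f : ℝ → E} {n i : ℕ}
    {a b s t : ℝ} (hab : a < b) (hf : ContDiffOn ℝ n f (Icc a b)) (hi : i < n)
    (hs : s ∈ Icc a b) (ht : t ∈ Icc a b) :
    ∫ u in s..t, iteratedDerivWithin (i + 1) f (Icc a b) u =
      iteratedDerivWithin i f (Icc a b) t - iteratedDerivWithin i f (Icc a b) s := by
  have hI := uniqueDiffOn_Icc hab
  have hsub : uIcc s t ⊆ Icc a b := uIcc_subset_Icc hs ht
  refine integral_eq_sub_of_hasDeriv_right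
    ((hf.continuousOn_iteratedDerivWithin (by exact_mod_cast hi.le) hI).mono hsub)
    (fun u hu => ?_)
    ((hf.continuousOn_iteratedDerivWithin (by exact_mod_cast hi) hI).mono hsub).intervalIntegrable
  have hnhds : Icc a b ∈ 𝓝 u :=
    Icc_mem_nhds (lt_of_le_of_lt (le_min hs.1 ht.1) hu.1) (lt_of_lt_of_le hu.2 (max_le hs.2 ht.2))
  rw [iteratedDerivWithin_succ, derivWithin_of_mem_nhds hnhds]
  exact ((hf.differentiableOn_iteratedDerivWithin (by exact_mod_cast hi) hI u
    (mem_of_mem_nhds hnhds)).differentiableAt hnhds).hasDerivAt.hasDerivWithinAt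

theorem norm_integral_le_of_integral_norm_sub_sq_le {f g : ℝ → E} {s t C α : ℝ} (hst : s ≤ t)
    (hf : ContinuousOn f (Icc s t)) (hg : ContinuousOn g (Icc s t))
    (hgC : ∀ u ∈ Icc s t, ‖g u‖ ≤ C) (hfg : ∫ u in s..t, ‖f u - g u‖ ^ 2 ≤ α ^ 2) :
    ‖∫ u in s..t, f u‖ ≤ C * (t - s) + |α| * √(t - s) := by
  have hr : ContinuousOn (fun u => ‖f u - g u‖) (Icc s t) := (hf.sub hg).norm
  have hr' : ContinuousOn (fun u => ‖f u - g u‖) (uIcc s t) := by rwa [uIcc_of_le hst]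
  have hf' : ContinuousOn f (uIcc s t) := by rwa [uIcc_of_le hst]
  have hL1 : ∫ u in s..t, ‖f u - g u‖ ≤ |α| * √(t - s) := by
    have hsq : (∫ u in s..t, ‖f u - g u‖) ^ 2 ≤ (t - s) * α ^ 2 :=
      (sq_integral_le_mul_integral_sq hst hr).trans
        (mul_le_mul_of_nonneg_left hfg (sub_nonneg.2 hst))
    calc ∫ u in s..t, ‖f u - g u‖ ≤ √((t - s) * α ^ 2) :=
          (le_abs_self _).trans (Real.abs_le_sqrt hsq)
      _ = |α| * √(t - s) := by
          rw [Real.sqrt_mul (sub_nonneg.2 hst), Real.sqrt_sq_eq_abs, mul_comm]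
  calc ‖∫ u in s..t, f u‖ ≤ ∫ u in s..t, ‖f u‖ := norm_integral_le_integral_norm hst
    _ ≤ ∫ u in s..t, (C + ‖f u - g u‖) := by
        refine integral_mono_on hst hf'.norm.intervalIntegrable
          (continuousOn_const.add hr').intervalIntegrable fun u hu => ?_
        linarith [norm_le_norm_add_norm_sub' (f u) (g u), hgC u hu]
    _ = C * (t - s) + ∫ u in s..t, ‖f u - g u‖ := by
        rw [integral_add intervalIntegrable_const hr'.intervalIntegrable,
          intervalIntegral.integral_const, smul_eq_mul, mul_comm]
    _ ≤ C * (t - s) + |α| * √(t - s) := by linarith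

theorem dist_iteratedDerivWithin_le_of_integral_norm_sub_sq_le [CompleteSpace E]
    {f g : ℝ → E} {n : ℕ} {a b C α s t : ℝ} (hab : a < b) (hf : ContDiffOn ℝ (n + 1) f (Icc a b))
    (hg : ContinuousOn g (Icc a b)) (hgC : ∀ u ∈ Icc a b, ‖g u‖ ≤ C)
    (hfg : ∫ u in a..b, ‖iteratedDerivWithin (n + 1) f (Icc a b) u - g u‖ ^ 2 ≤ α ^ 2)
    (hs : s ∈ Icc a b) (ht : t ∈ Icc a b) :
    dist (iteratedDerivWithin n f (Icc a b) s) (iteratedDerivWithin n f (Icc a b) t) ≤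
      C * dist s t + |α| * √(dist s t) := by
  wlog hst : s ≤ t generalizing s t
  · rw [dist_comm, dist_comm s]
    exact this ht hs (le_of_not_ge hst)
  have hsub : Icc s t ⊆ Icc a b := Icc_subset_Icc hs.1 ht.2
  have hD := hf.continuousOn_iteratedDerivWithin le_rfl (uniqueDiffOn_Icc hab)
  rw [dist_comm, dist_eq_norm, Real.dist_eq, abs_sub_comm, abs_of_nonneg (sub_nonneg.2 hst),
    ← integral_iteratedDerivWithin_succ hab hf (Nat.lt_succ_self n) hs ht]
  refine norm_integral_le_of_integral_norm_sub_sq_le hst (hD.mono hsub) (hg.mono hsub)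
    (fun u hu => hgC u (hsub hu)) (le_trans ?_ hfg)
  refine integral_mono_interval hs.1 hst ht.2 (Eventually.of_forall fun u => sq_nonneg _) ?_
  exact (((hD.sub hg).norm.pow 2).mono (uIcc_of_le hab.le).subset).intervalIntegrable

theorem TendstoUniformlyOn.intervalIntegral_primitive {ι : Type*} {l : Filter ι}
    {F : ι → ℝ → E} {g : ℝ → E} {a b : ℝ} (hF : ∀ i, IntervalIntegrable (F i) volume a b)
    (hg : IntervalIntegrable g volume a b) (h : TendstoUniformlyOn F g l (Icc a b)) :
    TendstoUniformlyOn (fun i t => ∫ u in a..t, F i u) (fun t => ∫ u in a..t, g u) l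
      (Icc a b) := by
  rw [Metric.tendstoUniformlyOn_iff] at h ⊢
  intro ε hε
  have hab : 0 < |b - a| + 1 := by positivity
  filter_upwards [h (ε / (|b - a| + 1)) (div_pos hε hab)] with i hi t ht
  have hsub : uIcc a t ⊆ uIcc a b := uIcc_subset_uIcc_left (mem_uIcc_of_le ht.1 ht.2)
  rw [dist_eq_norm, ← integral_sub (hg.mono_set hsub) ((hF i).mono_set hsub)]
  calc ‖∫ u in a..t, (g u - F i u)‖ ≤ ε / (|b - a| + 1) * |t - a| := by
        refine norm_integral_le_of_norm_le_const fun u hu => ?_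
        rw [uIoc_of_le ht.1] at hu
        rw [← dist_eq_norm]
        exact (hi u ⟨hu.1.le, hu.2.trans ht.2⟩).le
    _ < ε := by
        rw [abs_of_nonneg (sub_nonneg.2 ht.1), div_mul_eq_mul_div, div_lt_iff₀ hab]
        nlinarith [ht.2, le_abs_self (b - a)]

-- The `j`-th primitive takes the value `c j` at `a`; `c 0` is not used.
noncomputable def iteratedPrimitive (a : ℝ) (w : ℝ → E) (c : ℕ → E) : ℕ → ℝ → E
  | 0 => w
  | j + 1 => fun t => c (j + 1) + ∫ u in a..t, iteratedPrimitive a w c j u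

variable {a : ℝ} {w : ℝ → E} {c : ℕ → E}

theorem continuous_iteratedPrimitive (hw : Continuous w) :
    ∀ j, Continuous (iteratedPrimitive a w c j)
  | 0 => hw
  | j + 1 => continuous_const.add <|
      continuous_primitive
        (fun _ _ => (continuous_iteratedPrimitive hw j).intervalIntegrable _ _) a

theorem hasDerivAt_iteratedPrimitive_succ [CompleteSpace E] (hw : Continuous w) (j : ℕ)
    (t : ℝ) :
    HasDerivAt (iteratedPrimitive a w c (j + 1)) (iteratedPrimitive a w c j t) t :=
  (((continuous_iteratedPrimitive hw j).integral_hasStrictDerivAt a t).hasDerivAt).const_add _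

theorem contDiff_iteratedPrimitive [CompleteSpace E] (hw : Continuous w) :
    ∀ j : ℕ, ContDiff ℝ j (iteratedPrimitive a w c j)
  | 0 => contDiff_zero.mpr hw
  | j + 1 => by
    have hderiv : deriv (iteratedPrimitive a w c (j + 1)) = iteratedPrimitive a w c j :=
      funext fun t => (hasDerivAt_iteratedPrimitive_succ hw j t).deriv
    rw [Nat.cast_succ, contDiff_succ_iff_deriv, hderiv]
    exact ⟨fun t => (hasDerivAt_iteratedPrimitive_succ hw j t).differentiableAt, by simp,
      contDiff_iteratedPrimitive hw j⟩

theorem iteratedDerivWithin_iteratedPrimitive [CompleteSpace E] (hw : Continuous w) {s : Set ℝ}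
    (hs : UniqueDiffOn ℝ s) (j : ℕ) :
    ∀ i, EqOn (iteratedDerivWithin i (iteratedPrimitive a w c (j + i)) s)
      (iteratedPrimitive a w c j) s
  | 0 => fun _ _ => by simp
  | i + 1 => fun t ht => by
    have ih := iteratedDerivWithin_iteratedPrimitive hw hs (j + 1) i
    rw [← add_assoc, add_right_comm, iteratedDerivWithin_succ,
      derivWithin_congr ih (ih ht)]
    exact (hasDerivAt_iteratedPrimitive_succ hw j t).hasDerivWithinAt.derivWithin (hs t ht)

theorem exists_tendstoUniformlyOn_iteratedDerivWithin [CompleteSpace E] {f : ℕ → ℝ → E}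
    {n : ℕ} {a b : ℝ} {w : ℝ → E} (hab : a < b) (hf : ∀ m, ContDiffOn ℝ n (f m) (Icc a b))
    (hinit : ∀ m, ∀ i < n, iteratedDerivWithin i (f m) (Icc a b) a =
      iteratedDerivWithin i (f 0) (Icc a b) a)
    (hw : Continuous w)
    (hlim : TendstoUniformlyOn (fun m => iteratedDerivWithin n (f m) (Icc a b)) w atTop
      (Icc a b)) :
    ∃ y : ℝ → E, ContDiffOn ℝ n y (Icc a b) ∧ ∀ i ≤ n,
      TendstoUniformlyOn (fun m => iteratedDerivWithin i (f m) (Icc a b))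
        (iteratedDerivWithin i y (Icc a b)) atTop (Icc a b) := by
  set P := iteratedPrimitive a w (fun j => iteratedDerivWithin (n - j) (f 0) (Icc a b) a)
  have hconv : ∀ j i, i + j = n →
      TendstoUniformlyOn (fun m => iteratedDerivWithin i (f m) (Icc a b)) (P j) atTop
        (Icc a b) := by
    intro j
    induction j with
    | zero => rintro i rfl; exact hlim
    | succ j ih =>
      intro i hij
      have hFTC : ∀ m, EqOn (fun t => iteratedDerivWithin i (f 0) (Icc a b) a +
          ∫ u in a..t, iteratedDerivWithin (i + 1) (f m) (Icc a b) u)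
          (iteratedDerivWithin i (f m) (Icc a b)) (Icc a b) :=
        fun m t ht => by
          dsimp only
          rw [integral_iteratedDerivWithin_succ hab (hf m) (by omega) (left_mem_Icc.2 hab.le) ht,
            ← hinit m i (by omega), add_sub_cancel]
      have hP : P (j + 1) = fun t =>
          iteratedDerivWithin i (f 0) (Icc a b) a + ∫ u in a..t, P j u := by
        simp only [P, iteratedPrimitive, show n - (j + 1) = i by omega]
      have hint : ∀ m,
          IntervalIntegrable (iteratedDerivWithin (i + 1) (f m) (Icc a b)) volume a b := fun m =>
        ((hf m).continuousOn_iteratedDerivWithin (by exact_mod_cast (by omega : i + 1 ≤ n))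
          (uniqueDiffOn_Icc hab)).intervalIntegrable_of_Icc hab.le
      rw [hP]
      refine TendstoUniformlyOn.congr ?_ (Eventually.of_forall hFTC)
      exact (tendsto_const_nhds.tendstoUniformlyOn_const (Icc a b)).fun_add
        ((ih (i + 1) (by omega)).intervalIntegral_primitive hint
          ((continuous_iteratedPrimitive hw j).intervalIntegrable a b))
  refine ⟨P n, (contDiff_iteratedPrimitive hw n).contDiffOn, fun i hi => ?_⟩
  have hP : EqOn (iteratedDerivWithin i (P n) (Icc a b)) (P (n - i)) (Icc a b) := by
    simpa only [Nat.sub_add_cancel hi] using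
      iteratedDerivWithin_iteratedPrimitive hw (uniqueDiffOn_Icc hab) (a := a) (n - i) i
  exact (hconv (n - i) i (by omega)).congr_right hP.symm

end

theorem stmt6_general {E : Type*} [NormedAddCommGroup E] [InnerProductSpace ℝ E]
    [FiniteDimensional ℝ E]
    (k : ℕ) (hk : 1 ≤ k) (A : ℝ × E → E)
    (hA : ContinuousOn A (Set.Icc (0:ℝ) 1 ×ˢ (Set.univ : Set E)))
    (C : ℝ) (hC : ∀ t ∈ Set.Icc (0:ℝ) 1, ∀ p : E, ‖A (t, p)‖ ≤ C)
    (v : Fin k → E) (α : ℝ) (x : ℕ → ℝ → E)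
    (hx : ∀ m, ContDiffOn ℝ k (x m) (Set.Icc 0 1))
    (hbc : ∀ m, ∀ i : Fin k, iteratedDerivWithin i (x m) (Set.Icc 0 1) 0 = v i)
    (hJ : ∀ m, (∫ t in (0:ℝ)..1,
        ‖iteratedDerivWithin k (x m) (Set.Icc 0 1) t - A (t, x m t)‖ ^ 2) ≤ α ^ 2) :
    ∃ φ : ℕ → ℕ, StrictMono φ ∧ ∃ y : ℝ → E,
      ContDiffOn ℝ (k - 1 : ℕ) y (Set.Icc 0 1) ∧
      ∀ i ≤ k - 1, TendstoUniformlyOn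
        (fun m => iteratedDerivWithin i (x (φ m)) (Set.Icc 0 1))
        (iteratedDerivWithin i y (Set.Icc 0 1)) Filter.atTop (Set.Icc 0 1) := by
  obtain ⟨n, rfl⟩ : ∃ n, k = n + 1 := ⟨k - 1, by omega⟩
  simp only [Nat.add_sub_cancel]
  set ω : ℝ → ℝ := fun δ => C * δ + |α| * √δ
  have hω : Tendsto ω (𝓝 0) (𝓝 0) := by
    have hωc : Continuous ω := by fun_prop
    simpa [ω] using hωc.tendsto 0
  have hmod : ∀ m, ∀ s ∈ Icc (0 : ℝ) 1, ∀ t ∈ Icc (0 : ℝ) 1,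
      dist (iteratedDerivWithin n (x m) (Icc 0 1) s) (iteratedDerivWithin n (x m) (Icc 0 1) t) ≤
        ω (dist s t) := fun m s hs t ht =>
    dist_iteratedDerivWithin_le_of_integral_norm_sub_sq_le zero_lt_one (hx m)
      (hA.comp (continuousOn_id.prodMk (hx m).continuousOn) fun u hu => ⟨hu, mem_univ _⟩)
      (fun u hu => hC u hu _) (hJ m) hs ht
  have hbdd : ∀ m, ∀ t ∈ Icc (0 : ℝ) 1,
      iteratedDerivWithin n (x m) (Icc 0 1) t ∈
        Metric.closedBall (v (Fin.last n)) (|C| + |α|) := by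
    intro m t ht
    have hd : dist t 0 ≤ 1 := by rw [Real.dist_eq, sub_zero, abs_of_nonneg ht.1]; exact ht.2
    rw [Metric.mem_closedBall, ← hbc m (Fin.last n)]
    refine (hmod m t ht 0 (left_mem_Icc.2 zero_le_one)).trans ?_
    have : √(dist t 0) ≤ 1 := Real.sqrt_le_one.mpr hd
    nlinarith [le_abs_self C, abs_nonneg C, abs_nonneg α, dist_nonneg (x := t) (y := 0)]
  obtain ⟨φ, hφ, w, hw, hlim⟩ := exists_tendstoUniformlyOn_of_continuity_modulus zero_le_one
    (isCompact_closedBall _ _) hbdd hω hmod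
  obtain ⟨y, hy, hconv⟩ := exists_tendstoUniformlyOn_iteratedDerivWithin zero_lt_one
    (f := fun m => x (φ m)) (fun m => (hx (φ m)).of_le (by norm_cast; omega))
    (fun m i hi => (hbc _ ⟨i, by omega⟩).trans (hbc _ ⟨i, by omega⟩).symm) hw hlim
  exact ⟨φ, hφ, y, hy, hconv⟩

/-- Proposition 4.1 for curves in Euclidean space: the higher-order conditional
extremal functional `J_k` with bounded prior `A` is weakly proper with respect to
`C^{k-1}`: a bound on `J_k` on curves with fixed initial derivative data forces
relative compactness in the `C^{k-1}` topology. -/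
theorem stmt6 {E : Type*} [NormedAddCommGroup E] [InnerProductSpace ℝ E]
    [FiniteDimensional ℝ E]
    (k : ℕ) (hk : 1 ≤ k) (A : ℝ × E → E)
    (hA : ContinuousOn A (Set.Icc (0:ℝ) 1 ×ˢ (Set.univ : Set E)))
    (C : ℝ) (hC : ∀ t ∈ Set.Icc (0:ℝ) 1, ∀ p : E, ‖A (t, p)‖ ≤ C)
    (v : Fin k → E) (α : ℝ) (hα : 0 ≤ α) (x : ℕ → ℝ → E)
    (hx : ∀ m, ContDiffOn ℝ k (x m) (Set.Icc 0 1))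
    (hbc : ∀ m, ∀ i : Fin k, iteratedDerivWithin i (x m) (Set.Icc 0 1) 0 = v i)
    (hJ : ∀ m, (∫ t in (0:ℝ)..1,
        ‖iteratedDerivWithin k (x m) (Set.Icc 0 1) t - A (t, x m t)‖ ^ 2) ≤ α ^ 2) :
    ∃ φ : ℕ → ℕ, StrictMono φ ∧ ∃ y : ℝ → E,
      ContDiffOn ℝ (k - 1 : ℕ) y (Set.Icc 0 1) ∧
      ∀ i ≤ k - 1, TendstoUniformlyOn
        (fun m => iteratedDerivWithin i (x (φ m)) (Set.Icc 0 1))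
        (iteratedDerivWithin i y (Set.Icc 0 1)) Filter.atTop (Set.Icc 0 1) :=
  stmt6_general k hk A hA C hC v α x hx hbc hJ
end

section
/- Let E be a finite-dimensional real inner product space and k ≥ 1. Let B : [0,1] → (continuous bilinear forms on E) be continuous and suppose there is λ′ > 0 with B(t)(v,v) ≥ λ′‖v‖² for all t ∈ [0,1] and v ∈ E. For each pair (i,j) with 0 ≤ i, j ≤ k and i + j ≤ 2k − 1 let C_{ij} : [0,1] → (continuous bilinear forms on E) be continuous. Then there exist constants λ > 0 and c ≥ 0 such that for every k times continuously differentiable curve η : [0,1] → E, ∫₀¹ B(t)(η^{(k)}(t), η^{(k)}(t)) dt + Σ_{i+j≤2k−1} ∫₀¹ C_{ij}(t)(η^{(i)}(t), η^{(j)}(t)) dt ≥ λ Σ_{i=0}^{k} ∫₀¹ ‖η^{(i)}(t)‖² dt − c Σ_{i=0}^{k−1} ∫₀¹ ‖η^{(i)}(t)‖² dt. -/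
/-!
Pointwise, the top-order form gives `λ' ‖η⁽ᵏ⁾‖²`, and every lower-order term involves at most one
factor `η⁽ᵏ⁾`. By Peter–Paul, `|C(η⁽ⁱ⁾, η⁽ʲ⁾)| ≤ M (ε ‖η⁽ᵏ⁾‖² + (1 + 1/(4ε)) Σ_{m<k} ‖η⁽ᵐ⁾‖²)`,
where `M` bounds the coefficients uniformly on the compact interval; choosing `ε` small enough
that the lower-order terms absorb at most half of `λ'` and integrating gives the inequality with
`λ = λ'/2`.
-/

open Finset intervalIntegral

theorem IsCompact.exists_bound_of_continuousOn_finset {X ι F : Type*} [TopologicalSpace X]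
    [SeminormedAddCommGroup F] {K : Set X} (hK : IsCompact K) (S : Finset ι) {f : ι → X → F}
    (hf : ∀ i ∈ S, ContinuousOn (f i) K) :
    ∃ M ≥ 0, ∀ i ∈ S, ∀ x ∈ K, ‖f i x‖ ≤ M := by
  choose! M hM using fun i hi => hK.exists_bound_of_continuousOn (hf i hi)
  refine ⟨∑ i ∈ S, |M i|, by positivity, fun i hi x hx => ?_⟩
  calc ‖f i x‖ ≤ M i := hM i hi x hx
    _ ≤ |M i| := le_abs_self _
    _ ≤ ∑ j ∈ S, |M j| := single_le_sum (fun j _ => abs_nonneg (M j)) hi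

theorem mul_le_eps_mul_sq_add_sum_sq (a : ℕ → ℝ) {k i j : ℕ} (hi : i ≤ k) (hj : j ≤ k)
    (hij : i < k ∨ j < k) {ε : ℝ} (hε : 0 < ε) :
    a i * a j ≤ ε * a k ^ 2 + (1 + 1 / (4 * ε)) * ∑ m ∈ range k, a m ^ 2 := by
  wlog hjk : j < k generalizing i j
  · rw [mul_comm]
    exact this hj hi hij.symm (hij.resolve_right hjk)
  set L := ∑ m ∈ range k, a m ^ 2
  have hL : ∀ m < k, a m ^ 2 ≤ L := fun m hm =>
    single_le_sum (fun m _ => sq_nonneg (a m)) (mem_range.2 hm)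
  have hL0 : 0 ≤ L := sum_nonneg fun m _ => sq_nonneg (a m)
  have hε' : 0 < 1 / (4 * ε) := by positivity
  rcases hi.lt_or_eq with hik | rfl
  · nlinarith [hL i hik, hL j hjk, sq_nonneg (a i - a j), sq_nonneg (a k)]
  · have peter_paul : a i * a j ≤ ε * a i ^ 2 + 1 / (4 * ε) * a j ^ 2 := by
      have : ε * a i ^ 2 + 1 / (4 * ε) * a j ^ 2 - a i * a j
          = (2 * ε * a i - a j) ^ 2 / (4 * ε) := by
        field_simp; ring
      rw [← sub_nonneg, this]
      positivity
    nlinarith [hL j hjk]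

theorem integral_mul_sub_mul_sum_eq {f : ℕ → ℝ → ℝ} {μ : MeasureTheory.Measure ℝ} {a b : ℝ}
    {k : ℕ} (hf : ∀ i ≤ k, IntervalIntegrable (f i) μ a b) (α c : ℝ) :
    α * ∑ i ∈ range (k + 1), ∫ t in a..b, f i t ∂μ - (c + α) * ∑ i ∈ range k, ∫ t in a..b, f i t ∂μ
      = ∫ t in a..b, (α * f k t - c * ∑ i ∈ range k, f i t) ∂μ := by
  have hlow : ∀ i ∈ range k, IntervalIntegrable (f i) μ a b := fun i hi =>
    hf i (mem_range.1 hi).le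
  have hsum : IntervalIntegrable (fun t => ∑ i ∈ range k, f i t) μ a b := by
    simpa only [Finset.sum_fn] using IntervalIntegrable.sum _ hlow
  rw [integral_sub ((hf k le_rfl).const_mul _) (hsum.const_mul _), integral_const_mul,
    integral_const_mul, integral_finsetSum hlow, sum_range_succ]
  ring

section Pointwise

variable {E : Type*} [SeminormedAddCommGroup E] [NormedSpace ℝ E]

theorem neg_le_apply_of_lower_order (C : E →L[ℝ] E →L[ℝ] ℝ) {M : ℝ} (hC : ‖C‖ ≤ M)
    (u : ℕ → E) {k i j : ℕ} (hi : i ≤ k) (hj : j ≤ k) (hij : i < k ∨ j < k) {ε : ℝ}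
    (hε : 0 < ε) :
    -(M * (ε * ‖u k‖ ^ 2 + (1 + 1 / (4 * ε)) * ∑ m ∈ range k, ‖u m‖ ^ 2)) ≤ C (u i) (u j) := by
  refine neg_le_of_abs_le ?_
  calc |C (u i) (u j)| ≤ ‖C‖ * ‖u i‖ * ‖u j‖ := C.le_opNorm₂ _ _
    _ ≤ M * ‖u i‖ * ‖u j‖ := by gcongr
    _ = M * (‖u i‖ * ‖u j‖) := mul_assoc _ _ _
    _ ≤ _ := mul_le_mul_of_nonneg_left
        (mul_le_eps_mul_sq_add_sum_sq (fun m => ‖u m‖) hi hj hij hε) ((norm_nonneg C).trans hC)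

theorem exists_garding_pointwise {lam' : ℝ} (hlam' : 0 < lam') {k : ℕ} (S : Finset (ℕ × ℕ))
    (hS : ∀ q ∈ S, q.1 ≤ k ∧ q.2 ≤ k ∧ (q.1 < k ∨ q.2 < k)) {M : ℝ} (hM : 0 ≤ M) :
    ∃ c ≥ (0:ℝ), ∀ B : E →L[ℝ] E →L[ℝ] ℝ, (∀ v, lam' * ‖v‖ ^ 2 ≤ B v v) →
      ∀ C : ℕ → ℕ → E →L[ℝ] E →L[ℝ] ℝ, (∀ q ∈ S, ‖C q.1 q.2‖ ≤ M) → ∀ u : ℕ → E,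
        lam' / 2 * ‖u k‖ ^ 2 - c * ∑ i ∈ range k, ‖u i‖ ^ 2
          ≤ B (u k) (u k) + ∑ q ∈ S, C q.1 q.2 (u q.1) (u q.2) := by
  obtain ⟨ε, hε, hNε⟩ : ∃ ε > 0, #S * M * ε ≤ lam' / 2 := by
    refine ⟨lam' / (2 * (#S * M + 1)), by positivity, ?_⟩
    rw [mul_div, div_le_div_iff₀ (by positivity) two_pos]
    nlinarith
  refine ⟨#S * M * (1 + 1 / (4 * ε)), by positivity, fun B hB C hC u => ?_⟩
  set L := ∑ i ∈ range k, ‖u i‖ ^ 2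
  have hterm : ∀ q ∈ S, -(M * (ε * ‖u k‖ ^ 2 + (1 + 1 / (4 * ε)) * L))
      ≤ C q.1 q.2 (u q.1) (u q.2) := fun q hq =>
    neg_le_apply_of_lower_order (C q.1 q.2) (hC q hq) u (hS q hq).1 (hS q hq).2.1 (hS q hq).2.2 hε
  have hsum := card_nsmul_le_sum S (fun q => C q.1 q.2 (u q.1) (u q.2)) _ hterm
  rw [nsmul_eq_mul] at hsum
  linarith [hB (u k), mul_le_mul_of_nonneg_right hNε (sq_nonneg ‖u k‖)]

end Pointwise

theorem stmt8_general {E : Type*} [NormedAddCommGroup E] [InnerProductSpace ℝ E]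
    (k : ℕ) (hk : 1 ≤ k)
    (B : ℝ → E →L[ℝ] E →L[ℝ] ℝ) (hB : ContinuousOn B (Set.Icc 0 1))
    (lam' : ℝ) (hlam' : 0 < lam')
    (hcoer : ∀ t ∈ Set.Icc (0:ℝ) 1, ∀ v : E, lam' * ‖v‖ ^ 2 ≤ B t v v)
    (C : ℕ → ℕ → ℝ → E →L[ℝ] E →L[ℝ] ℝ)
    (hC : ∀ i ≤ k, ∀ j ≤ k, i + j ≤ 2 * k - 1 → ContinuousOn (C i j) (Set.Icc 0 1)) :
    ∃ lam > (0:ℝ), ∃ c ≥ (0:ℝ), ∀ η : ℝ → E, ContDiffOn ℝ k η (Set.Icc 0 1) →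
      lam * (∑ i ∈ Finset.range (k+1),
          ∫ t in (0:ℝ)..1, ‖iteratedDerivWithin i η (Set.Icc 0 1) t‖ ^ 2)
        - c * (∑ i ∈ Finset.range k,
          ∫ t in (0:ℝ)..1, ‖iteratedDerivWithin i η (Set.Icc 0 1) t‖ ^ 2)
      ≤ (∫ t in (0:ℝ)..1,
          B t (iteratedDerivWithin k η (Set.Icc 0 1) t)
            (iteratedDerivWithin k η (Set.Icc 0 1) t))
        + ∑ q ∈ (Finset.range (k+1) ×ˢ Finset.range (k+1)).filter
            (fun q => q.1 + q.2 ≤ 2 * k - 1),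
            ∫ t in (0:ℝ)..1,
              C q.1 q.2 t (iteratedDerivWithin q.1 η (Set.Icc 0 1) t)
                (iteratedDerivWithin q.2 η (Set.Icc 0 1) t) := by
  set S := (range (k+1) ×ˢ range (k+1)).filter (fun q => q.1 + q.2 ≤ 2 * k - 1)
  have hS : ∀ q ∈ S, q.1 ≤ k ∧ q.2 ≤ k ∧ (q.1 < k ∨ q.2 < k) := by
    intro q hq
    simp only [S, mem_filter, mem_product, mem_range] at hq
    omega
  have hCS : ∀ q ∈ S, ContinuousOn (C q.1 q.2) (Set.Icc 0 1) := fun q hq =>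
    hC q.1 (hS q hq).1 q.2 (hS q hq).2.1 (mem_filter.1 hq).2
  obtain ⟨M, hM0, hM⟩ := isCompact_Icc.exists_bound_of_continuousOn_finset S
    (f := fun q : ℕ × ℕ => C q.1 q.2) hCS
  obtain ⟨c, hc, hpt⟩ := exists_garding_pointwise (E := E) hlam' S hS hM0
  refine ⟨lam' / 2, by positivity, c + lam' / 2, by positivity, fun η hη => ?_⟩
  set u := fun i => iteratedDerivWithin i η (Set.Icc (0:ℝ) 1)
  have hu : ∀ i ≤ k, ContinuousOn (u i) (Set.Icc 0 1) := fun i hi =>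
    hη.continuousOn_iteratedDerivWithin (by exact_mod_cast hi) (uniqueDiffOn_Icc one_pos)
  have hu2 : ∀ i ≤ k, ContinuousOn (fun t => ‖u i t‖ ^ 2) (Set.Icc 0 1) := fun i hi =>
    (hu i hi).norm.pow 2
  have hBu : ContinuousOn (fun t => B t (u k t) (u k t)) (Set.Icc 0 1) :=
    (hB.clm_apply (hu k le_rfl)).clm_apply (hu k le_rfl)
  have hCu : ∀ q ∈ S, ContinuousOn (fun t => C q.1 q.2 t (u q.1 t) (u q.2 t)) (Set.Icc 0 1) :=
    fun q hq => ((hCS q hq).clm_apply (hu _ (hS q hq).1)).clm_apply (hu _ (hS q hq).2.1)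
  have hint : ∀ {f : ℝ → ℝ}, ContinuousOn f (Set.Icc 0 1) →
      IntervalIntegrable f MeasureTheory.volume 0 1 :=
    fun hf => hf.intervalIntegrable_of_Icc zero_le_one
  rw [integral_mul_sub_mul_sum_eq fun i hi => hint (hu2 i hi),
    ← integral_finsetSum fun q hq => hint (hCu q hq), ← integral_add (hint hBu)
      (hint (continuousOn_finsetSum _ hCu))]
  refine integral_mono_on zero_le_one (hint ?_) (hint (hBu.add (continuousOn_finsetSum _ hCu)))
    fun t ht => hpt (B t) (hcoer t ht) (fun i j => C i j t) (fun q hq => hM q hq t ht)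
      (fun i => u i t)
  exact ((hu2 k le_rfl).const_mul _).sub
    ((continuousOn_finsetSum _ fun i hi => hu2 i (mem_range.1 hi).le).const_mul _)

/-- Gårding-type inequality (local coercivity, Theorem 3.1): a coercive top-order
bilinear form plus continuous lower-order terms dominates
`λ‖η‖²_{H^k} − c‖η‖²_{H^{k-1}}`. -/
theorem stmt8 {E : Type*} [NormedAddCommGroup E] [InnerProductSpace ℝ E]
    [FiniteDimensional ℝ E]
    (k : ℕ) (hk : 1 ≤ k)
    (B : ℝ → E →L[ℝ] E →L[ℝ] ℝ) (hB : ContinuousOn B (Set.Icc 0 1))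
    (lam' : ℝ) (hlam' : 0 < lam')
    (hcoer : ∀ t ∈ Set.Icc (0:ℝ) 1, ∀ v : E, lam' * ‖v‖ ^ 2 ≤ B t v v)
    (C : ℕ → ℕ → ℝ → E →L[ℝ] E →L[ℝ] ℝ)
    (hC : ∀ i ≤ k, ∀ j ≤ k, i + j ≤ 2 * k - 1 → ContinuousOn (C i j) (Set.Icc 0 1)) :
    ∃ lam > (0:ℝ), ∃ c ≥ (0:ℝ), ∀ η : ℝ → E, ContDiffOn ℝ k η (Set.Icc 0 1) →
      lam * (∑ i ∈ Finset.range (k+1),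
          ∫ t in (0:ℝ)..1, ‖iteratedDerivWithin i η (Set.Icc 0 1) t‖ ^ 2)
        - c * (∑ i ∈ Finset.range k,
          ∫ t in (0:ℝ)..1, ‖iteratedDerivWithin i η (Set.Icc 0 1) t‖ ^ 2)
      ≤ (∫ t in (0:ℝ)..1,
          B t (iteratedDerivWithin k η (Set.Icc 0 1) t)
            (iteratedDerivWithin k η (Set.Icc 0 1) t))
        + ∑ q ∈ (Finset.range (k+1) ×ˢ Finset.range (k+1)).filter
            (fun q => q.1 + q.2 ≤ 2 * k - 1),
            ∫ t in (0:ℝ)..1,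
              C q.1 q.2 t (iteratedDerivWithin q.1 η (Set.Icc 0 1) t)
                (iteratedDerivWithin q.2 η (Set.Icc 0 1) t) :=
  stmt8_general k hk B hB lam' hlam' hcoer C hC
end

section
/- Let E be a finite-dimensional real inner product space and k ≥ 1. Let B : [0,1] × E → (continuous bilinear forms on E) be continuous with B(t,p)(v,v) ≥ λ′‖v‖² for some λ′ > 0 and all t, p, v. Let 𝒜 be a finite set of multi-indices α = (α₁,…,α_r) with r ≥ 1, 1 ≤ αᵢ ≤ k, Σᵢ αᵢ ≤ 2k and α ≠ (k,k), and for each α ∈ 𝒜 let A_α : [0,1] × E → (continuous r-linear forms on E) be continuous; let also A₀ : [0,1] × E → ℝ be continuous. For a k times continuously differentiable curve ξ : [0,1] → E set J(ξ) = ∫₀¹ [ B(t,ξ(t))(ξ^{(k)}(t), ξ^{(k)}(t)) + Σ_{α∈𝒜} A_α(t,ξ(t))(ξ^{(α₁)}(t),…,ξ^{(α_r)}(t)) + A₀(t,ξ(t)) ] dt. Then for all constants K and L there exists a constant N such that every k times continuously differentiable ξ : [0,1] → E with max_{0≤i≤k−1} sup_{t∈[0,1]} ‖ξ^{(i)}(t)‖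 ≤ K and J(ξ) ≤ L satisfies Σ_{i=0}^{k} ∫₀¹ ‖ξ^{(i)}(t)‖² dt ≤ N. -/
/-!
Coercivity of `B` puts `λ'‖ξ⁽ᵏ⁾‖²` into the integrand. Since every factor of a monomial `A_α` has
order at least `1`, the weight is at most `2k` and `α ≠ (k, k)`, at most one factor of each
monomial is `ξ⁽ᵏ⁾`; the others have order `< k` and are bounded by `K`, and so are the coefficients
on the compact set `[0,1] × B̄(0, K)`. Hence the lower-order part of the integrand grows at most
linearly in `‖ξ⁽ᵏ⁾‖` and Young's inequality absorbs it: the integrand is at least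
`λ'/2 ‖ξ⁽ᵏ⁾‖² - C`. Integrating bounds `∫ ‖ξ⁽ᵏ⁾‖²` by `(L + C) / (λ'/2)`, and the lower derivatives
are bounded pointwise by `K`.
-/

open Finset

theorem subsingleton_setOf_eq_of_sum_le {r k : ℕ} {α : Fin r → ℕ} (hα1 : ∀ i, 1 ≤ α i)
    (hαw : ∑ i, α i ≤ 2 * k) (hαne : ¬(r = 2 ∧ ∀ i, α i = k)) :
    {i | α i = k}.Subsingleton := by
  intro i (hi : α i = k) j (hj : α j = k)
  by_contra hij
  have hcover : ∀ l, l = i ∨ l = j := by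
    intro l
    by_contra! hl
    have hsum := sum_le_sum_of_subset (f := α) (subset_univ {i, j, l})
    rw [sum_insert (by simp [hij, hl.1.symm]), sum_pair (Ne.symm hl.2)] at hsum
    have := hα1 l
    omega
  refine hαne ⟨?_, fun l => by rcases hcover l with rfl | rfl <;> assumption⟩
  have huniv : (univ : Finset (Fin r)) = {i, j} := by
    ext l
    simpa using hcover l
  simpa [card_pair hij] using congrArg card huniv

theorem prod_le_one_add_pow_mul_one_add {ι : Type*} [Fintype ι] {f : ι → ℝ} {K x : ℝ}
    (hK : 0 ≤ K) (hx : 0 ≤ x) (hf0 : ∀ i, 0 ≤ f i) (hfx : ∀ i, K < f i → f i ≤ x)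
    (hsub : {i | K < f i}.Subsingleton) :
    ∏ i, f i ≤ (1 + K) ^ Fintype.card ι * (1 + x) := by
  classical
  have hK1 : 1 ≤ 1 + K := by linarith
  by_cases hbig : ∃ i, K < f i
  · obtain ⟨i, hi⟩ := hbig
    have hrest : ∀ j ∈ univ.erase i, f j ≤ 1 + K := fun j hj => by
      have : ¬K < f j := fun hj' => (mem_erase.1 hj).1 (hsub hj' hi)
      linarith
    calc ∏ j, f j = f i * ∏ j ∈ univ.erase i, f j := (mul_prod_erase _ _ (mem_univ i)).symm
      _ ≤ (1 + x) * ∏ _j ∈ univ.erase i, (1 + K) :=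
          mul_le_mul (by linarith [hfx i hi]) (prod_le_prod (fun j _ => hf0 j) hrest)
            (prod_nonneg fun j _ => hf0 j) (by linarith)
      _ ≤ (1 + x) * ∏ _j, (1 + K) :=
          mul_le_mul_of_nonneg_left (prod_le_prod_of_subset_of_one_le (erase_subset i univ)
            (fun _ _ => by linarith) fun _ _ _ => hK1) (by linarith)
      _ = (1 + K) ^ Fintype.card ι * (1 + x) := by rw [prod_const, card_univ, mul_comm]
  · simp only [not_exists, not_lt] at hbig
    calc ∏ j, f j ≤ ∏ _j : ι, (1 + K) :=
          prod_le_prod (fun j _ => hf0 j) fun j _ => hbig j |>.trans (by linarith)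
      _ = (1 + K) ^ Fintype.card ι * 1 := by simp
      _ ≤ (1 + K) ^ Fintype.card ι * (1 + x) := by gcongr; linarith

theorem mul_le_half_mul_sq_add_sq_div {lam : ℝ} (hlam : 0 < lam) (c x : ℝ) :
    c * x ≤ lam / 2 * x ^ 2 + c ^ 2 / (2 * lam) := by
  have hsq : lam / 2 * x ^ 2 + c ^ 2 / (2 * lam) - c * x = (lam * x - c) ^ 2 / (2 * lam) := by
    field_simp
    ring
  have : 0 ≤ (lam * x - c) ^ 2 / (2 * lam) := by positivity
  linarith

section Jet

variable {𝕜 E G : Type*} [NontriviallyNormedField 𝕜] [NormedAddCommGroup E] [NormedSpace 𝕜 E]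
  [NormedAddCommGroup G] [NormedSpace 𝕜 G]

theorem ContinuousMultilinearMap.norm_apply_jet_le {r k : ℕ}
    (f : ContinuousMultilinearMap 𝕜 (fun _ : Fin r => E) G) {α : Fin r → ℕ}
    (hα1 : ∀ i, 1 ≤ α i) (hαk : ∀ i, α i ≤ k) (hαw : ∑ i, α i ≤ 2 * k)
    (hαne : ¬(r = 2 ∧ ∀ i, α i = k)) {v : ℕ → E} {K : ℝ} (hK : 0 ≤ K)
    (hv : ∀ i < k, ‖v i‖ ≤ K) :
    ‖f (fun i => v (α i))‖ ≤ ‖f‖ * ((1 + K) ^ r * (1 + ‖v k‖)) := by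
  refine (f.le_opNorm _).trans (mul_le_mul_of_nonneg_left ?_ (norm_nonneg f))
  have htop : ∀ i, K < ‖v (α i)‖ → α i = k := fun i hi =>
    (hαk i).eq_or_lt.resolve_right fun hlt => hi.not_ge (hv _ hlt)
  simpa using prod_le_one_add_pow_mul_one_add hK (norm_nonneg _) (fun i => norm_nonneg _)
    (fun i hi => by rw [htop i hi]) ((subsingleton_setOf_eq_of_sum_le hα1 hαw hαne).anti htop)

end Jet

section Lagrangian

variable {E : Type*} [NormedAddCommGroup E] [NormedSpace ℝ E] {ι : Type*} [Fintype ι]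
  {r : ι → ℕ}

/-- The integrand of `J`, evaluated on a jet: `p` stands for `ξ(t)` and `v i` for `ξ⁽ⁱ⁾(t)`. -/
noncomputable def lagrangian (k : ℕ) (B : ℝ × E → E →L[ℝ] E →L[ℝ] ℝ)
    (α : (a : ι) → Fin (r a) → ℕ)
    (A : (a : ι) → ℝ × E → ContinuousMultilinearMap ℝ (fun _ : Fin (r a) => E) ℝ)
    (A₀ : ℝ × E → ℝ) (t : ℝ) (p : E) (v : ℕ → E) : ℝ :=
  B (t, p) (v k) (v k) + ∑ a, A a (t, p) (fun i => v (α a i)) + A₀ (t, p)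

variable {k : ℕ} {B : ℝ × E → E →L[ℝ] E →L[ℝ] ℝ} {α : (a : ι) → Fin (r a) → ℕ}
  {A : (a : ι) → ℝ × E → ContinuousMultilinearMap ℝ (fun _ : Fin (r a) => E) ℝ}
  {A₀ : ℝ × E → ℝ}

theorem exists_half_mul_sq_norm_sub_le_lagrangian [ProperSpace E] {lam : ℝ} (hlam : 0 < lam)
    (hcoer : ∀ t p v, lam * ‖v‖ ^ 2 ≤ B (t, p) v v)
    (hα1 : ∀ a i, 1 ≤ α a i) (hαk : ∀ a i, α a i ≤ k) (hαw : ∀ a, ∑ i, α a i ≤ 2 * k)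
    (hαne : ∀ a, ¬(r a = 2 ∧ ∀ i, α a i = k))
    (hA : ∀ a, Continuous (A a)) (hA₀ : Continuous A₀) (K : ℝ) :
    ∃ C, ∀ t ∈ Set.Icc (0 : ℝ) 1, ∀ p : E, ‖p‖ ≤ K → ∀ v : ℕ → E, (∀ i < k, ‖v i‖ ≤ K) →
      lam / 2 * ‖v k‖ ^ 2 - C ≤ lagrangian k B α A A₀ t p v := by
  have hS : IsCompact (Set.Icc (0 : ℝ) 1 ×ˢ Metric.closedBall (0 : E) K) :=
    isCompact_Icc.prod (isCompact_closedBall _ _)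
  choose M hM using fun a => hS.exists_bound_of_continuousOn (hA a).continuousOn
  obtain ⟨M₀, hM₀⟩ := hS.exists_bound_of_continuousOn hA₀.continuousOn
  set C₁ := ∑ a, M a * (1 + K) ^ r a
  refine ⟨C₁ ^ 2 / (2 * lam) + C₁ + M₀, fun t ht p hp v hv => ?_⟩
  have hK : 0 ≤ K := (norm_nonneg p).trans hp
  have hq : (t, p) ∈ Set.Icc (0 : ℝ) 1 ×ˢ Metric.closedBall (0 : E) K :=
    ⟨ht, mem_closedBall_zero_iff.2 hp⟩
  have hsum : -(C₁ * (1 + ‖v k‖)) ≤ ∑ a, A a (t, p) (fun i => v (α a i)) := by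
    rw [sum_mul, ← sum_neg_distrib]
    refine sum_le_sum fun a _ => neg_le_of_abs_le ?_
    rw [← Real.norm_eq_abs, mul_assoc]
    exact ((A a (t, p)).norm_apply_jet_le (hα1 a) (hαk a) (hαw a) (hαne a) hK hv).trans
      (mul_le_mul_of_nonneg_right (hM a _ hq) (by positivity))
  have hA₀t : -M₀ ≤ A₀ (t, p) := neg_le_of_abs_le (hM₀ _ hq)
  have hBt := hcoer t p (v k)
  have hyoung := mul_le_half_mul_sq_add_sq_div hlam C₁ ‖v k‖
  unfold lagrangian
  linarith

theorem ContDiffOn.continuousOn_lagrangian {s : Set ℝ} (hs : UniqueDiffOn ℝ s) {ξ : ℝ → E}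
    (hξ : ContDiffOn ℝ k ξ s) (hB : Continuous B) (hαk : ∀ a i, α a i ≤ k)
    (hA : ∀ a, Continuous (A a)) (hA₀ : Continuous A₀) :
    ContinuousOn (fun t => lagrangian k B α A A₀ t (ξ t) (fun i => iteratedDerivWithin i ξ s t))
      s := by
  have hD : ∀ m ≤ k, ContinuousOn (iteratedDerivWithin m ξ s) s := fun m hm =>
    hξ.continuousOn_iteratedDerivWithin (by exact_mod_cast hm) hs
  have hpt : ContinuousOn (fun t => (t, ξ t)) s := continuousOn_id.prodMk hξ.continuousOn
  refine (ContinuousOn.add (ContinuousOn.add ?_ ?_) (hA₀.comp_continuousOn hpt))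
  · exact ((hB.comp_continuousOn hpt).clm_apply (hD k le_rfl)).clm_apply (hD k le_rfl)
  · exact continuousOn_finsetSum _ fun a _ => continuous_eval.comp_continuousOn
      (((hA a).comp_continuousOn hpt).prodMk (continuousOn_pi.2 fun i => hD _ (hαk a i)))

end Lagrangian

theorem mul_integral_sub_le_integral {f g : ℝ → ℝ} {a b c C : ℝ} (hab : a ≤ b)
    (hf : ContinuousOn f (Set.Icc a b)) (hg : ContinuousOn g (Set.Icc a b))
    (hfg : ∀ t ∈ Set.Icc a b, c * f t - C ≤ g t) :
    c * (∫ t in a..b, f t) - (b - a) * C ≤ ∫ t in a..b, g t := by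
  rw [← Set.uIcc_of_le hab] at hf hg
  have hcf : IntervalIntegrable (fun t => c * f t) MeasureTheory.volume a b :=
    hf.intervalIntegrable.const_mul c
  have hmono := intervalIntegral.integral_mono_on hab (hcf.sub intervalIntegrable_const)
    hg.intervalIntegrable hfg
  rwa [intervalIntegral.integral_sub hcf intervalIntegrable_const,
    intervalIntegral.integral_const_mul, intervalIntegral.integral_const, smul_eq_mul] at hmono

theorem integral_sq_norm_le_of_norm_le {E : Type*} [NormedAddCommGroup E] {f : ℝ → E} {a b K : ℝ}
    (hab : a ≤ b) (hf : ∀ t ∈ Set.Icc a b, ‖f t‖ ≤ K) :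
    ∫ t in a..b, ‖f t‖ ^ 2 ≤ (b - a) * K ^ 2 := by
  have hbound : ∀ t ∈ Set.uIoc a b, ‖‖f t‖ ^ 2‖ ≤ K ^ 2 := fun t ht => by
    have hft := hf t (Set.Ioc_subset_Icc_self (Set.uIoc_of_le hab ▸ ht))
    rw [norm_pow, norm_norm]
    exact pow_le_pow_left₀ (norm_nonneg _) hft 2
  calc ∫ t in a..b, ‖f t‖ ^ 2 ≤ ‖∫ t in a..b, ‖f t‖ ^ 2‖ := Real.le_norm_self _
    _ ≤ K ^ 2 * |b - a| := intervalIntegral.norm_integral_le_of_norm_le_const hbound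
    _ = (b - a) * K ^ 2 := by rw [abs_of_nonneg (sub_nonneg.2 hab), mul_comm]

theorem stmt9_general {E : Type*} [NormedAddCommGroup E] [InnerProductSpace ℝ E]
    [FiniteDimensional ℝ E]
    (k : ℕ)
    (B : ℝ × E → E →L[ℝ] E →L[ℝ] ℝ) (hB : Continuous B)
    (lam' : ℝ) (hlam' : 0 < lam')
    (hcoer : ∀ (t : ℝ) (p : E) (v : E), lam' * ‖v‖ ^ 2 ≤ B (t, p) v v)
    {ι : Type*} [Fintype ι] (r : ι → ℕ)
    (α : (a : ι) → Fin (r a) → ℕ)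
    (hα1 : ∀ a i, 1 ≤ α a i) (hαk : ∀ a i, α a i ≤ k)
    (hαw : ∀ a, (∑ i, α a i) ≤ 2 * k)
    (hαne : ∀ a, ¬ (r a = 2 ∧ ∀ i, α a i = k))
    (A : (a : ι) → ℝ × E → ContinuousMultilinearMap ℝ (fun _ : Fin (r a) => E) ℝ)
    (hA : ∀ a, Continuous (A a))
    (A₀ : ℝ × E → ℝ) (hA₀ : Continuous A₀) :
    ∀ K L : ℝ, ∃ N : ℝ, ∀ ξ : ℝ → E, ContDiffOn ℝ k ξ (Set.Icc 0 1) →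
      (∀ i ≤ k - 1, ∀ t ∈ Set.Icc (0:ℝ) 1,
          ‖iteratedDerivWithin i ξ (Set.Icc 0 1) t‖ ≤ K) →
      (∫ t in (0:ℝ)..1,
          (B (t, ξ t) (iteratedDerivWithin k ξ (Set.Icc 0 1) t)
              (iteratedDerivWithin k ξ (Set.Icc 0 1) t)
            + ∑ a, A a (t, ξ t) (fun i => iteratedDerivWithin (α a i) ξ (Set.Icc 0 1) t)
            + A₀ (t, ξ t))) ≤ L →
      (∑ i ∈ Finset.range (k+1),
          ∫ t in (0:ℝ)..1, ‖iteratedDerivWithin i ξ (Set.Icc 0 1) t‖ ^ 2) ≤ N := by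
  intro K L
  obtain ⟨C, hC⟩ :=
    exists_half_mul_sq_norm_sub_le_lagrangian hlam' hcoer hα1 hαk hαw hαne hA hA₀ K
  refine ⟨k * K ^ 2 + (L + C) / (lam' / 2), fun ξ hξ hK hJ => ?_⟩
  have hlow : ∀ i < k, ∀ t ∈ Set.Icc (0 : ℝ) 1,
      ‖iteratedDerivWithin i ξ (Set.Icc 0 1) t‖ ≤ K := fun i hi => hK i (by omega)
  have hlower : ∑ i ∈ range k,
      ∫ t in (0 : ℝ)..1, ‖iteratedDerivWithin i ξ (Set.Icc 0 1) t‖ ^ 2 ≤ k * K ^ 2 := by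
    simpa using sum_le_sum fun i hi =>
      integral_sq_norm_le_of_norm_le zero_le_one (hlow i (mem_range.1 hi))
  have hs := uniqueDiffOn_Icc (zero_lt_one' ℝ)
  have hintegral := mul_integral_sub_le_integral
    (f := fun t => ‖iteratedDerivWithin k ξ (Set.Icc 0 1) t‖ ^ 2) zero_le_one
    ((hξ.continuousOn_iteratedDerivWithin le_rfl hs).norm.pow 2)
    (hξ.continuousOn_lagrangian hs hB hαk hA hA₀) fun t ht =>
      hC t ht (ξ t) (by simpa using hK 0 (Nat.zero_le _) t ht) _ fun i hi => hlow i hi t ht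
  have hhigh : ∫ t in (0 : ℝ)..1, ‖iteratedDerivWithin k ξ (Set.Icc 0 1) t‖ ^ 2
      ≤ (L + C) / (lam' / 2) := by
    rw [sub_zero, one_mul] at hintegral
    rw [le_div_iff₀ (by positivity)]
    linarith [hintegral.trans hJ]
  rw [sum_range_succ]
  linarith

/-- Locally bounding assertion of Theorem 3.1 in a chart: for the action `J` of a
strongly elliptic polynomial differential operator of order `k` and weight `2k`,
a bound on `J` together with a `C^{k-1}` bound forces an `H^k` bound. -/
theorem stmt9 {E : Type*} [NormedAddCommGroup E] [InnerProductSpace ℝ E]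
    [FiniteDimensional ℝ E]
    (k : ℕ) (hk : 1 ≤ k)
    (B : ℝ × E → E →L[ℝ] E →L[ℝ] ℝ) (hB : Continuous B)
    (lam' : ℝ) (hlam' : 0 < lam')
    (hcoer : ∀ (t : ℝ) (p : E) (v : E), lam' * ‖v‖ ^ 2 ≤ B (t, p) v v)
    {ι : Type*} [Fintype ι] (r : ι → ℕ) (hr : ∀ a, 1 ≤ r a)
    (α : (a : ι) → Fin (r a) → ℕ)
    (hα1 : ∀ a i, 1 ≤ α a i) (hαk : ∀ a i, α a i ≤ k)
    (hαw : ∀ a, (∑ i, α a i) ≤ 2 * k)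
    (hαne : ∀ a, ¬ (r a = 2 ∧ ∀ i, α a i = k))
    (A : (a : ι) → ℝ × E → ContinuousMultilinearMap ℝ (fun _ : Fin (r a) => E) ℝ)
    (hA : ∀ a, Continuous (A a))
    (A₀ : ℝ × E → ℝ) (hA₀ : Continuous A₀) :
    ∀ K L : ℝ, ∃ N : ℝ, ∀ ξ : ℝ → E, ContDiffOn ℝ k ξ (Set.Icc 0 1) →
      (∀ i ≤ k - 1, ∀ t ∈ Set.Icc (0:ℝ) 1,
          ‖iteratedDerivWithin i ξ (Set.Icc 0 1) t‖ ≤ K) →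
      (∫ t in (0:ℝ)..1,
          (B (t, ξ t) (iteratedDerivWithin k ξ (Set.Icc 0 1) t)
              (iteratedDerivWithin k ξ (Set.Icc 0 1) t)
            + ∑ a, A a (t, ξ t) (fun i => iteratedDerivWithin (α a i) ξ (Set.Icc 0 1) t)
            + A₀ (t, ξ t))) ≤ L →
      (∑ i ∈ Finset.range (k+1),
          ∫ t in (0:ℝ)..1, ‖iteratedDerivWithin i ξ (Set.Icc 0 1) t‖ ^ 2) ≤ N :=
  stmt9_general k B hB lam' hlam' hcoer r α hα1 hαk hαw hαne A hA A₀ hA₀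
end

section
/- Let X be a path-connected topological space, n ≥ 2, let 0 = t₀ < t₁ < … < t_{n−1} = 1 be real numbers and p₀, …, p_{n−1} ∈ X. Then the subspace {x ∈ C([0,1],X) : x(tᵢ) = pᵢ for all 0 ≤ i ≤ n−1} of the space of continuous maps [0,1] → X with the compact-open topology is homotopy equivalent to the (n−1)-fold product (Ω_{p₀}X)^{n−1}, where Ω_{p₀}X is the space of loops at p₀ in X with the compact-open topology. -/
/-!
Restricting a curve to the subintervals `[tₖ, tₖ₊₁]` and rescaling them affinely to `[0, 1]`
identifies the space of interpolating curves homeomorphically with the product of the path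
spaces `Path pₖ pₖ₊₁`; the inverse glues paths together, and is continuous because the
subintervals form a finite closed cover. In a path-connected space every path space `Path a b`
is homotopy equivalent to the loop space at `p₀`: prepending a fixed path `γ` is a homotopy
equivalence with inverse prepending `γ.symm`, by the associativity and cancellation homotopies
of path concatenation, which are continuous in the remaining path.
-/

open unitInterval

noncomputable section

namespace Path

variable {X : Type*} [TopologicalSpace X] {a b c : X}

def transLeft (γ : Path a b) (c : X) : C(Path b c, Path a c) :=
  ⟨γ.trans, continuous_const.path_trans continuous_id⟩

@[simp]
lemma transLeft_apply (γ : Path a b) (q : Path b c) : transLeft γ c q = γ.trans q := rfl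

def Homotopy.transLeft {γ₀ γ₁ : Path a b} (F : γ₀.Homotopy γ₁) (c : X) :
    (Path.transLeft γ₀ c).Homotopy (Path.transLeft γ₁ c) where
  toFun q := (F.eval q.1).trans q.2
  continuous_toFun :=
    ((continuous_uncurry_iff.mp F.continuous : Continuous F.eval).comp continuous_fst).path_trans
      continuous_snd
  map_zero_left q := by simp
  map_one_left q := by simp

def transLeftCompTransLeftHomotopy (δ : Path a b) (γ : Path b c) (d : X) :
    ((transLeft δ d).comp (transLeft γ d)).Homotopy (transLeft (δ.trans γ) d) where
  toFun q := (Homotopy.reparam (δ.trans (γ.trans q.2))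
    (fun t => ⟨Homotopy.transAssocReparamAux t, Homotopy.transAssocReparamAux_mem_I t⟩)
    (by fun_prop) (Subtype.ext Homotopy.transAssocReparamAux_zero)
    (Subtype.ext Homotopy.transAssocReparamAux_one)).eval q.1
  continuous_toFun := continuous_uncurry_iff.mp <|
    ((continuous_const.path_trans (continuous_const.path_trans continuous_snd)).comp
      continuous_fst).eval (Continuous.subtype_mk (by fun_prop) _)
  map_zero_left q := Homotopy.eval_zero _
  map_one_left q := (Homotopy.eval_one _).trans (Homotopy.trans_assoc_reparam δ γ q).symm

def reflTransLeftHomotopy (b c : X) :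
    (transLeft (Path.refl b) c).Homotopy (ContinuousMap.id (Path b c)) where
  toFun q := delayReflLeft q.1 q.2
  continuous_toFun := continuous_delayReflLeft
  map_zero_left := delayReflLeft_zero
  map_one_left := delayReflLeft_one

lemma transLeft_symm_comp_transLeft_homotopic (γ : Path a b) (c : X) :
    ((transLeft γ.symm c).comp (transLeft γ c)).Homotopic (ContinuousMap.id _) :=
  ⟨(transLeftCompTransLeftHomotopy γ.symm γ c).trans <|
    ((Homotopy.reflSymmTrans γ).symm.transLeft c).trans (reflTransLeftHomotopy b c)⟩

def transLeftHomotopyEquiv (γ : Path a b) (c : X) :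
    ContinuousMap.HomotopyEquiv (Path b c) (Path a c) where
  toFun := transLeft γ c
  invFun := transLeft γ.symm c
  left_inv := transLeft_symm_comp_transLeft_homotopic γ c
  right_inv := by simpa using transLeft_symm_comp_transLeft_homotopic γ.symm c

def symmHomeomorph (a b : X) : Path a b ≃ₜ Path b a where
  toFun := Path.symm
  invFun := Path.symm
  left_inv := symm_symm
  right_inv := symm_symm
  continuous_toFun := continuous_symm
  continuous_invFun := continuous_symm

def homotopyEquivOfPathConnectedSpace [PathConnectedSpace X] (a b c d : X) :
    ContinuousMap.HomotopyEquiv (Path a b) (Path c d) :=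
  (transLeftHomotopyEquiv (PathConnectedSpace.somePath c a) b).trans <|
    (symmHomeomorph c b).toHomotopyEquiv.trans <|
      (transLeftHomotopyEquiv (PathConnectedSpace.somePath d b) c).trans
        (symmHomeomorph d c).toHomotopyEquiv

end Path

namespace Set.Icc

variable {a b : ℝ}

/-- The inverse of `convexComb x y`, clamped to `I` (and junk, constantly `0`, when `x = y`). -/
def invConvexComb (x y s : Icc a b) : I :=
  projIcc 0 1 zero_le_one ((s - x) / (y - x))

lemma continuous_invConvexComb (x y : Icc a b) : Continuous (invConvexComb x y) :=
  continuous_projIcc.comp (by fun_prop)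

@[simp]
lemma invConvexComb_left (x y : Icc a b) : invConvexComb x y x = 0 := by
  simp [invConvexComb]

lemma invConvexComb_right {x y : Icc a b} (h : x < y) : invConvexComb x y y = 1 := by
  have : (y - x : ℝ) ≠ 0 := sub_ne_zero.2 (Subtype.coe_injective.ne h.ne')
  simp [invConvexComb, div_self this]

lemma invConvexComb_convexComb {x y : Icc a b} (h : x < y) (u : I) :
    invConvexComb x y (convexComb x y u) = u := by
  have : (y - x : ℝ) ≠ 0 := sub_ne_zero.2 (Subtype.coe_injective.ne h.ne')
  have hu : ((1 - u : ℝ) * x + u * y - x) / (y - x) = u := by field_simp; ring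
  simp only [invConvexComb, coe_convexComb, hu, projIcc_val]

lemma convexComb_invConvexComb {x y s : Icc a b} (hs : s ∈ Icc x y) :
    convexComb x y (invConvexComb x y s) = s := by
  rcases hs.1.eq_or_lt with hxs | hxs
  · simp [← hxs]
  have hxy : (0 : ℝ) < y - x := sub_pos.2 (hxs.trans_le hs.2)
  have hmem : ((s - x) / (y - x) : ℝ) ∈ Icc (0 : ℝ) 1 :=
    ⟨div_nonneg (sub_nonneg.2 hs.1) hxy.le, (div_le_one hxy).2 (by gcongr; exact hs.2)⟩
  ext
  simp only [invConvexComb, coe_convexComb, projIcc_of_mem _ hmem]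
  field_simp
  ring

end Set.Icc

theorem Fin.exists_mem_Icc_castSucc_succ {α : Type*} [LinearOrder α] {m : ℕ}
    (t : Fin (m + 2) → α) {s : α} (h0 : t 0 ≤ s) (h1 : s ≤ t (Fin.last _)) :
    ∃ k : Fin (m + 1), s ∈ Set.Icc (t k.castSucc) (t k.succ) := by
  induction m with
  | zero => exact ⟨0, h0, h1⟩
  | succ m ih =>
    rcases le_or_gt s (t 1) with hs | hs
    · exact ⟨0, h0, hs⟩
    · obtain ⟨k, hk⟩ := ih (t ∘ Fin.succ) hs.le h1
      refine ⟨k.succ, ?_⟩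
      rwa [← Fin.succ_castSucc]

section Interpolation

open Set Set.Icc

variable {X : Type*} [TopologicalSpace X]

abbrev PathChain {m : ℕ} (p : Fin (m + 1) → X) : Type _ :=
  ∀ k : Fin m, Path (p k.castSucc) (p k.succ)

abbrev InterpolatingCurves {n : ℕ} (t : Fin n → I) (p : Fin n → X) : Type _ :=
  {x : C(I, X) // ∀ i, x (t i) = p i}

section Segments

variable {m : ℕ} (t : Fin (m + 1) → I) (p : Fin (m + 1) → X)

def segmentCoord (k : Fin m) : I → I :=
  invConvexComb (t k.castSucc) (t k.succ)

def restrictSegments (x : InterpolatingCurves t p) : PathChain p := fun k =>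
  { toContinuousMap :=
      x.1.comp ⟨convexComb (t k.castSucc) (t k.succ), continuous_convexComb _ _⟩
    source' := by simp [x.2]
    target' := by simp [x.2] }

lemma continuous_restrictSegments : Continuous (restrictSegments t p) :=
  continuous_pi fun _ => continuous_induced_rng.2 <|
    (ContinuousMap.continuous_precomp _).comp continuous_subtype_val

variable {t p}

lemma PathChain.apply_segmentCoord_eq (ht : StrictMono t) (γ : PathChain p) {s : I}
    {k l : Fin m} (hk : s ∈ Icc (t k.castSucc) (t k.succ))
    (hl : s ∈ Icc (t l.castSucc) (t l.succ)) :
    γ k (segmentCoord t k s) = γ l (segmentCoord t l s) := by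
  wlog hkl : k < l generalizing k l
  · rcases (not_lt.1 hkl).eq_or_lt with rfl | hlk
    · rfl
    · exact (this hl hk hlk).symm
  -- adjacent segments overlap only in their common endpoint
  have hle : t k.succ ≤ t l.castSucc := ht.monotone (Fin.succ_le_castSucc_iff.2 hkl)
  have hsk : s = t k.succ := le_antisymm hk.2 (hle.trans hl.1)
  have hsl : s = t l.castSucc := le_antisymm (hk.2.trans hle) hl.1
  calc γ k (segmentCoord t k s) = p k.succ := by
        rw [segmentCoord, hsk, invConvexComb_right (ht k.castSucc_lt_succ), (γ k).target]
    _ = p l.castSucc := congrArg p (ht.injective (hsk.symm.trans hsl))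
    _ = γ l (segmentCoord t l s) := by rw [segmentCoord, hsl, invConvexComb_left, (γ l).source]

end Segments

section Gluing

variable {m : ℕ} {t : Fin (m + 2) → I} {p : Fin (m + 2) → X}

variable (t) in
def segmentIndex (s : I) : Fin (m + 1) :=
  Classical.epsilon fun k => s ∈ Icc (t k.castSucc) (t k.succ)

variable (t p) in
def glueFun (γ : PathChain p) (s : I) : X :=
  γ (segmentIndex t s) (segmentCoord t (segmentIndex t s) s)

lemma glueFun_eq (ht : StrictMono t) (γ : PathChain p) {s : I} {k : Fin (m + 1)}
    (hk : s ∈ Icc (t k.castSucc) (t k.succ)) : glueFun t p γ s = γ k (segmentCoord t k s) :=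
  γ.apply_segmentCoord_eq ht
    (Classical.epsilon_spec (p := fun k => s ∈ Icc (t k.castSucc) (t k.succ)) ⟨k, hk⟩) hk

lemma exists_mem_segment (h0 : t 0 = 0) (h1 : t (Fin.last _) = 1) (s : I) :
    ∃ k : Fin (m + 1), s ∈ Icc (t k.castSucc) (t k.succ) :=
  Fin.exists_mem_Icc_castSucc_succ t (h0 ▸ nonneg') (h1 ▸ le_one')

lemma continuous_glueFun (ht : StrictMono t) (h0 : t 0 = 0) (h1 : t (Fin.last _) = 1) :
    Continuous fun q : PathChain p × I => glueFun t p q.1 q.2 := by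
  refine (locallyFinite_of_finite fun k : Fin (m + 1) =>
    Prod.snd ⁻¹' Icc (t k.castSucc) (t k.succ)).continuous ?_
    (fun _ => isClosed_Icc.preimage continuous_snd) fun k => ?_
  · exact eq_univ_of_forall fun q => mem_iUnion.2 (exists_mem_segment h0 h1 q.2)
  · have hk : Continuous fun q : PathChain p × I => q.1 k (segmentCoord t k q.2) :=
      ((continuous_apply k).comp continuous_fst).eval
        ((continuous_invConvexComb _ _).comp continuous_snd)
    exact hk.continuousOn.congr fun q hq => glueFun_eq ht q.1 hq

lemma glueFun_apply_self (ht : StrictMono t) (γ : PathChain p) (i : Fin (m + 2)) :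
    glueFun t p γ (t i) = p i := by
  induction i using Fin.lastCases with
  | last =>
    have hk : t (Fin.last m).succ ∈ Icc (t (Fin.last m).castSucc) (t (Fin.last m).succ) :=
      ⟨ht.monotone Fin.castSucc_lt_succ.le, le_rfl⟩
    rw [← Fin.succ_last, glueFun_eq ht γ hk, segmentCoord,
      invConvexComb_right (ht Fin.castSucc_lt_succ), (γ _).target]
  | cast k =>
    have hk : t k.castSucc ∈ Icc (t k.castSucc) (t k.succ) :=
      ⟨le_rfl, ht.monotone Fin.castSucc_lt_succ.le⟩
    rw [glueFun_eq ht γ hk, segmentCoord, invConvexComb_left, (γ k).source]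

def glueSegments (ht : StrictMono t) (h0 : t 0 = 0) (h1 : t (Fin.last _) = 1) (γ : PathChain p) :
    InterpolatingCurves t p :=
  ⟨ContinuousMap.curry ⟨_, continuous_glueFun ht h0 h1⟩ γ, glueFun_apply_self ht γ⟩

def interpolatingCurvesHomeomorph (ht : StrictMono t) (h0 : t 0 = 0) (h1 : t (Fin.last _) = 1) :
    InterpolatingCurves t p ≃ₜ PathChain p where
  toFun := restrictSegments t p
  invFun := glueSegments ht h0 h1
  left_inv x := by
    ext s
    obtain ⟨k, hk⟩ := exists_mem_segment h0 h1 s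
    change glueFun t p (restrictSegments t p x) s = x.1 s
    rw [glueFun_eq ht _ hk]
    exact congrArg x.1 (convexComb_invConvexComb hk)
  right_inv γ := by
    funext k
    ext u
    have hk : t k.castSucc ≤ t k.succ := (ht Fin.castSucc_lt_succ).le
    have hu : convexComb (t k.castSucc) (t k.succ) u ∈ Icc (t k.castSucc) (t k.succ) :=
      ⟨le_convexComb hk u, convexComb_le hk u⟩
    change glueFun t p γ (convexComb _ _ u) = γ k u
    rw [glueFun_eq ht γ hu, segmentCoord, invConvexComb_convexComb (ht Fin.castSucc_lt_succ)]
  continuous_toFun := continuous_restrictSegments t p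
  continuous_invFun := (ContinuousMap.curry _).continuous.subtype_mk _

end Gluing

end Interpolation

end

/-- Corollary 5.6: in a path-connected space, the space of continuous curves
interpolating `n` prescribed points has the homotopy type of the `(n-1)`-fold
cartesian power of the based loop space at `p₀`. -/
theorem stmt12 {X : Type*} [TopologicalSpace X] [PathConnectedSpace X]
    (n : ℕ) (hn : 2 ≤ n)
    (t : Fin n → ℝ) (ht : StrictMono t)
    (h0 : t ⟨0, by omega⟩ = 0) (h1 : t ⟨n - 1, by omega⟩ = 1)
    (hmem : ∀ i, t i ∈ unitInterval) (p : Fin n → X) :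
    Nonempty
      (ContinuousMap.HomotopyEquiv
        {x : C(unitInterval, X) // ∀ i : Fin n, x ⟨t i, hmem i⟩ = p i}
        (Fin (n - 1) → Path (p ⟨0, by omega⟩) (p ⟨0, by omega⟩))) := by
  obtain ⟨m, rfl⟩ : ∃ m, n = m + 2 := ⟨n - 2, by omega⟩
  let tI : Fin (m + 2) → I := fun i => ⟨t i, hmem i⟩
  have htI : StrictMono tI := fun _ _ hij => ht hij
  exact ⟨(interpolatingCurvesHomeomorph (p := p) htI (Subtype.ext h0) (Subtype.ext h1)
    ).toHomotopyEquiv.trans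
      (.piCongrRight fun _ => Path.homotopyEquivOfPathConnectedSpace _ _ _ _)⟩
end
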